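/- arXiv:1206.0810 — 2 statements merged into one kernel-verified Lean document; each statement's English description precedes it below -/
import Mathlib

section
/- If f/w ∈ L^p(ℝⁿ, Y) with 1 < p < ∞ and w·g ∈ L^q(ℝⁿ, ℂ) with q the conjugate exponent, then (g*f)/w ∈ C₀(ℝⁿ, Y), i.e., (g*f)(x)/w(x) → 0 as ‖x‖ → ∞. -/
/-!
Put `F = f / w ∈ Lᵖ` and `G = w g ∈ L^q`. Since `w y ≤ w x * w (x - y)`, the quantity
`‖(g ⋆ f) x‖ / w x` is dominated by the `ℝ≥0∞`-valued convolution `(‖F‖ ⋆ ‖G‖) x`, so it suffices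
that this convolution vanishes at infinity. Approximate `F` and `G` in `Lᵖ`, `L^q` by compactly
supported `F₀`, `G₀`: by Hölder and translation invariance the errors are uniformly small, while
`‖F₀‖ ⋆ ‖G₀‖` vanishes outside the compact set `tsupport F₀ + tsupport G₀`.
-/

open MeasureTheory Filter Topology
open scoped ENNReal Pointwise

theorem ENNReal.tendsto_nhds_zero_of_eventually_le_mul {α : Type*} {l : Filter α}
    {u : α → ℝ≥0∞} {C : ℝ≥0∞} (hC : C ≠ ∞)
    (h : ∀ δ : ℝ≥0∞, 0 < δ → δ ≤ 1 → ∀ᶠ x in l, u x ≤ δ * C) : Tendsto u l (𝓝 0) := by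
  rw [ENNReal.tendsto_nhds_zero]
  intro ε hε
  have hC₀ : C + 1 ≠ 0 := by simp
  have hC_top : C + 1 ≠ ∞ := by simp [hC]
  filter_upwards [h (min 1 (ε / (C + 1))) (lt_min one_pos (ENNReal.div_pos hε.ne' hC_top))
    (min_le_left _ _)] with x hx
  calc u x ≤ min 1 (ε / (C + 1)) * C := hx
    _ ≤ ε / (C + 1) * (C + 1) := by gcongr; exacts [min_le_right _ _, le_self_add]
    _ = ε := ENNReal.div_mul_cancel hC₀ hC_top

namespace MeasureTheory

section LConvolution

variable {G : Type*} [MeasurableSpace G] {μ : Measure G}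

theorem lconvolution_mono [Add G] [Neg G] {f f' g g' : G → ℝ≥0∞} (hf : f ≤ f') (hg : g ≤ g') :
    f ⋆ₗ[μ] g ≤ f' ⋆ₗ[μ] g' := fun _ =>
  lintegral_mono fun y => mul_le_mul' (hf y) (hg _)

theorem lconvolution_eq_zero_of_notMem_support_add [AddGroup G] {f g : G → ℝ≥0∞} {x : G}
    (hx : x ∉ Function.support f + Function.support g) : (f ⋆ₗ[μ] g) x = 0 := by
  refine (lintegral_congr fun y => ?_).trans lintegral_zero
  by_contra hy
  obtain ⟨hfy, hgy⟩ := mul_ne_zero_iff.1 hy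
  exact hx ⟨y, hfy, -y + x, hgy, add_neg_cancel_left y x⟩

variable [AddGroup G] [MeasurableAdd G] [MeasurableNeg G] [μ.IsAddRightInvariant]
  [μ.IsNegInvariant]

theorem measurePreserving_neg_add (x : G) : MeasurePreserving (fun y => -y + x) μ μ :=
  (measurePreserving_add_right μ x).comp (Measure.measurePreserving_neg μ)

theorem lconvolution_add_left {f₁ f₂ g : G → ℝ≥0∞} (hf₁ : AEMeasurable f₁ μ)
    (hg : AEMeasurable g μ) : (f₁ + f₂) ⋆ₗ[μ] g = f₁ ⋆ₗ[μ] g + f₂ ⋆ₗ[μ] g := by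
  ext x
  have hg' := hg.comp_quasiMeasurePreserving
    (measurePreserving_neg_add (μ := μ) x).quasiMeasurePreserving
  simp only [lconvolution, Pi.add_apply, add_mul]
  exact lintegral_add_left' (hf₁.mul hg') _

theorem lconvolution_add_right {f g₁ g₂ : G → ℝ≥0∞} (hf : AEMeasurable f μ)
    (hg₁ : AEMeasurable g₁ μ) : f ⋆ₗ[μ] (g₁ + g₂) = f ⋆ₗ[μ] g₁ + f ⋆ₗ[μ] g₂ := by
  ext x
  have hg₁' := hg₁.comp_quasiMeasurePreserving
    (measurePreserving_neg_add (μ := μ) x).quasiMeasurePreserving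
  simp only [lconvolution, Pi.add_apply, mul_add]
  exact lintegral_add_left' (hf.mul hg₁') _

variable {E F : Type*} [NormedAddCommGroup E] [NormedAddCommGroup F]

theorem lconvolution_enorm_le_eLpNorm_mul_eLpNorm {p q : ℝ≥0∞} [p.HolderConjugate q]
    {f : G → E} {g : G → F} (hf : AEStronglyMeasurable f μ) (hg : AEStronglyMeasurable g μ)
    (x : G) : ((‖f ·‖ₑ) ⋆ₗ[μ] (‖g ·‖ₑ)) x ≤ eLpNorm f p μ * eLpNorm g q μ := by
  have hmp := measurePreserving_neg_add (μ := μ) x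
  have hg' : AEStronglyMeasurable (fun y => g (-y + x)) μ :=
    hg.comp_quasiMeasurePreserving hmp.quasiMeasurePreserving
  have holder := eLpNorm_smul_le_mul_eLpNorm (r := 1) hg'.norm hf.norm (p := p) (q := q)
  have htrans : eLpNorm (fun y => g (-y + x)) q μ = eLpNorm g q μ :=
    eLpNorm_comp_measurePreserving hg hmp
  rw [eLpNorm_one_eq_lintegral_enorm, eLpNorm_norm, eLpNorm_norm, htrans] at holder
  simpa only [lconvolution, smul_eq_mul, Pi.mul_apply, enorm_mul, enorm_norm] using holder

theorem lconvolution_enorm_le_of_approx {p q : ℝ≥0∞} [p.HolderConjugate q]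
    {f f₀ : G → E} {g g₀ : G → F} (hf : AEStronglyMeasurable f μ)
    (hf₀ : AEStronglyMeasurable f₀ μ) (hg : AEStronglyMeasurable g μ)
    (hg₀ : AEStronglyMeasurable g₀ μ) (x : G) :
    ((‖f ·‖ₑ) ⋆ₗ[μ] (‖g ·‖ₑ)) x ≤ eLpNorm (f - f₀) p μ * eLpNorm g q μ +
      eLpNorm f₀ p μ * eLpNorm (g - g₀) q μ + ((‖f₀ ·‖ₑ) ⋆ₗ[μ] (‖g₀ ·‖ₑ)) x := by
  have hf_split : (‖f ·‖ₑ) ≤ (‖(f - f₀) ·‖ₑ) + (‖f₀ ·‖ₑ) := fun y => by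
    simpa using enorm_add_le ((f - f₀) y) (f₀ y)
  have hg_split : (‖g ·‖ₑ) ≤ (‖(g - g₀) ·‖ₑ) + (‖g₀ ·‖ₑ) := fun y => by
    simpa using enorm_add_le ((g - g₀) y) (g₀ y)
  calc ((‖f ·‖ₑ) ⋆ₗ[μ] (‖g ·‖ₑ)) x
      ≤ (((‖(f - f₀) ·‖ₑ) + (‖f₀ ·‖ₑ)) ⋆ₗ[μ] (‖g ·‖ₑ)) x := lconvolution_mono hf_split le_rfl x
    _ = ((‖(f - f₀) ·‖ₑ) ⋆ₗ[μ] (‖g ·‖ₑ)) x + ((‖f₀ ·‖ₑ) ⋆ₗ[μ] (‖g ·‖ₑ)) x := by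
        rw [lconvolution_add_left (hf.sub hf₀).enorm hg.enorm, Pi.add_apply]
    _ ≤ ((‖(f - f₀) ·‖ₑ) ⋆ₗ[μ] (‖g ·‖ₑ)) x +
          ((‖f₀ ·‖ₑ) ⋆ₗ[μ] ((‖(g - g₀) ·‖ₑ) + (‖g₀ ·‖ₑ))) x := by
        gcongr; exact lconvolution_mono le_rfl hg_split x
    _ = ((‖(f - f₀) ·‖ₑ) ⋆ₗ[μ] (‖g ·‖ₑ)) x + ((‖f₀ ·‖ₑ) ⋆ₗ[μ] (‖(g - g₀) ·‖ₑ)) x +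
          ((‖f₀ ·‖ₑ) ⋆ₗ[μ] (‖g₀ ·‖ₑ)) x := by
        rw [lconvolution_add_right hf₀.enorm (hg.sub hg₀).enorm, Pi.add_apply, add_assoc]
    _ ≤ _ := by
        gcongr
        exacts [lconvolution_enorm_le_eLpNorm_mul_eLpNorm (hf.sub hf₀) hg x,
          lconvolution_enorm_le_eLpNorm_mul_eLpNorm hf₀ (hg.sub hg₀) x]

end LConvolution

theorem tendsto_lconvolution_enorm_cocompact {G : Type*} [TopologicalSpace G] [AddGroup G]
    [IsTopologicalAddGroup G] [NormalSpace G] [WeaklyLocallyCompactSpace G] [MeasurableSpace G]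
    [BorelSpace G] {μ : Measure G} [μ.Regular] [μ.IsAddRightInvariant] [μ.IsNegInvariant]
    {E F : Type*} [NormedAddCommGroup E] [NormedSpace ℝ E] [NormedAddCommGroup F]
    [NormedSpace ℝ F] {p q : ℝ≥0∞} [p.HolderConjugate q] (hp : p ≠ ∞) (hq : q ≠ ∞)
    {f : G → E} {g : G → F} (hf : MemLp f p μ) (hg : MemLp g q μ) :
    Tendsto ((‖f ·‖ₑ) ⋆ₗ[μ] (‖g ·‖ₑ)) (cocompact G) (𝓝 0) := by
  refine ENNReal.tendsto_nhds_zero_of_eventually_le_mul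
    (C := eLpNorm f p μ + eLpNorm g q μ + 1) (by simp [hf.eLpNorm_ne_top, hg.eLpNorm_ne_top])
    fun δ hδ hδ₁ => ?_
  obtain ⟨f₀, hf₀_supp, hf₀_approx, -, hf₀⟩ :=
    hf.exists_hasCompactSupport_eLpNorm_sub_le hp hδ.ne'
  obtain ⟨g₀, hg₀_supp, hg₀_approx, -, hg₀⟩ :=
    hg.exists_hasCompactSupport_eLpNorm_sub_le hq hδ.ne'
  have hf₀_norm : eLpNorm f₀ p μ ≤ eLpNorm f p μ + δ := by
    simpa using (eLpNorm_sub_le hf.1 (hf.1.sub hf₀.1)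
      (ENNReal.HolderConjugate.one_le p q)).trans (by gcongr)
  filter_upwards [(hf₀_supp.isCompact.add hg₀_supp.isCompact).compl_mem_cocompact] with x hx
  have hvanish : ((‖f₀ ·‖ₑ) ⋆ₗ[μ] (‖g₀ ·‖ₑ)) x = 0 := by
    refine lconvolution_eq_zero_of_notMem_support_add fun hx' => hx ?_
    refine Set.add_subset_add (fun y hy => subset_tsupport _ ?_)
      (fun y hy => subset_tsupport _ ?_) hx' <;> simpa using hy
  calc ((‖f ·‖ₑ) ⋆ₗ[μ] (‖g ·‖ₑ)) x
      ≤ eLpNorm (f - f₀) p μ * eLpNorm g q μ + eLpNorm f₀ p μ * eLpNorm (g - g₀) q μ + 0 :=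
        hvanish ▸ lconvolution_enorm_le_of_approx hf.1 hf₀.1 hg.1 hg₀.1 x
    _ ≤ δ * eLpNorm g q μ + (eLpNorm f p μ + δ) * δ + 0 := by gcongr
    _ = δ * (eLpNorm f p μ + eLpNorm g q μ + δ) := by ring
    _ ≤ δ * (eLpNorm f p μ + eLpNorm g q μ + 1) := by gcongr

end MeasureTheory

theorem one_add_norm_rpow_le_mul {V : Type*} [SeminormedAddGroup V] {k : ℝ} (hk : 0 ≤ k)
    (x y : V) : (1 + ‖y‖) ^ k ≤ (1 + ‖x‖) ^ k * (1 + ‖x - y‖) ^ k := by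
  rw [← Real.mul_rpow (by positivity) (by positivity)]
  gcongr
  nlinarith [norm_le_norm_add_norm_sub x y, norm_nonneg x, norm_nonneg (x - y)]

theorem enorm_inv_weight_smul_integral_le_lconvolution {V Y : Type*} [AddCommGroup V]
    [MeasurableSpace V] (μ : Measure V) [NormedAddCommGroup Y] [NormedSpace ℂ Y]
    {w : V → ℝ} (hw : ∀ x, 0 < w x) (hw_mul : ∀ x y, w y ≤ w x * w (x - y))
    (f : V → Y) (g : V → ℂ) (x : V) :
    ‖((w x)⁻¹ : ℂ) • ∫ y, g (x - y) • f y ∂μ‖ₑ ≤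
      ((fun y => ‖((w y)⁻¹ : ℂ) • f y‖ₑ) ⋆ₗ[μ] (fun y => ‖(w y : ℂ) * g y‖ₑ)) x := by
  calc ‖((w x)⁻¹ : ℂ) • ∫ y, g (x - y) • f y ∂μ‖ₑ
      ≤ ‖((w x)⁻¹ : ℂ)‖ₑ * ∫⁻ y, ‖g (x - y) • f y‖ₑ ∂μ := by
        rw [enorm_smul]; gcongr; exact enorm_integral_le_lintegral_enorm _
    _ = ∫⁻ y, ‖((w x)⁻¹ : ℂ)‖ₑ * ‖g (x - y) • f y‖ₑ ∂μ :=
        (lintegral_const_mul' _ _ enorm_ne_top).symm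
    _ ≤ _ := lintegral_mono fun y => ?_
  have hw_inv : (w x)⁻¹ ≤ (w y)⁻¹ * w (x - y) := by
    rw [inv_mul_eq_div, le_div_iff₀ (hw y), inv_mul_le_iff₀ (hw x)]
    exact hw_mul x y
  simp only [neg_add_eq_sub, ← ofReal_norm, norm_smul, norm_mul, norm_inv, Complex.norm_real,
    Real.norm_of_nonneg (hw _).le]
  rw [← ENNReal.ofReal_mul (inv_nonneg.2 (hw x).le),
    ← ENNReal.ofReal_mul (mul_nonneg (inv_nonneg.2 (hw y).le) (norm_nonneg _))]
  refine ENNReal.ofReal_le_ofReal ?_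
  calc (w x)⁻¹ * (‖g (x - y)‖ * ‖f y‖)
      ≤ (w y)⁻¹ * w (x - y) * (‖g (x - y)‖ * ‖f y‖) := by gcongr
    _ = (w y)⁻¹ * ‖f y‖ * (w (x - y) * ‖g (x - y)‖) := by ring

theorem weighted_convolution_c0_general (n : ℕ) (k : ℝ) (hk : 0 ≤ k)
    {Y : Type*} [NormedAddCommGroup Y] [NormedSpace ℂ Y]
    (w : EuclideanSpace ℝ (Fin n) → ℝ) (hw : ∀ x, w x = (1 + ‖x‖) ^ k)
    (p q : ℝ≥0∞) (hpq : p⁻¹ + q⁻¹ = 1) (hp : 1 < p) (hp' : p ≠ ∞)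
    (f : EuclideanSpace ℝ (Fin n) → Y)
    (g : EuclideanSpace ℝ (Fin n) → ℂ)
    (hfw : MemLp (fun x => ((w x)⁻¹ : ℂ) • f x) p volume)
    (hwg : MemLp (fun x => (w x : ℂ) * g x) q volume) :
    Tendsto (fun x => ((w x)⁻¹ : ℂ) • ∫ y, g (x - y) • f y)
      (Filter.cocompact (EuclideanSpace ℝ (Fin n))) (nhds 0) := by
  have : p.HolderConjugate q := ENNReal.holderConjugate_iff.2 hpq
  have hq : q ≠ ∞ := ((ENNReal.HolderConjugate.lt_top_iff_one_lt q p).2 hp).ne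
  have hw_pos : ∀ x, 0 < w x := fun x => hw x ▸ Real.rpow_pos_of_pos (by positivity) k
  have hw_mul : ∀ x y, w y ≤ w x * w (x - y) := fun x y => by
    simpa only [hw] using one_add_norm_rpow_le_mul hk x y
  rw [tendsto_zero_iff_enorm_tendsto_zero]
  exact tendsto_of_tendsto_of_tendsto_of_le_of_le tendsto_const_nhds
    (tendsto_lconvolution_enorm_cocompact hp' hq hfw hwg) (fun _ => zero_le)
    (enorm_inv_weight_smul_integral_le_lconvolution volume hw_pos hw_mul f g)

theorem weighted_convolution_c0 (n : ℕ) (k : ℝ) (hk : 0 ≤ k)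
    {Y : Type*} [NormedAddCommGroup Y] [NormedSpace ℂ Y] [CompleteSpace Y]
    (w : EuclideanSpace ℝ (Fin n) → ℝ) (hw : ∀ x, w x = (1 + ‖x‖) ^ k)
    (p q : ℝ≥0∞) (hpq : p⁻¹ + q⁻¹ = 1) (hp : 1 < p) (hp' : p ≠ ∞)
    (f : EuclideanSpace ℝ (Fin n) → Y) (hf : AEStronglyMeasurable f volume)
    (g : EuclideanSpace ℝ (Fin n) → ℂ) (hg : AEStronglyMeasurable g volume)
    (hfw : MemLp (fun x => ((w x)⁻¹ : ℂ) • f x) p volume)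
    (hwg : MemLp (fun x => (w x : ℂ) * g x) q volume) :
    Tendsto (fun x => ((w x)⁻¹ : ℂ) • ∫ y, g (x - y) • f y)
      (Filter.cocompact (EuclideanSpace ℝ (Fin n))) (nhds 0) :=
  weighted_convolution_c0_general n k hk w hw p q hpq hp hp' f g hfw hwg
end

section
/- Fix 0 < α < π/2 and a bounded uniformly continuous f : ℝⁿ → Y with f/w bounded uniformly continuous, where w(x) = (1+‖x‖)^k, k ≥ 0. Then sup_x ‖(χ_ζ * f)(x) − f(x)‖/w(x) → 0 as ζ → 0 within the sector {ζ ≠ 0 : |arg ζ| < α}. -/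
/-!
For `|arg ζ| ≤ α < π / 2` the complex kernel is dominated by the real heat kernel:
`|χ_ζ| ≤ (cos α) ^ (-n/2) h_t` with `t = |ζ| / cos α`. Since `∫ χ_ζ = 1`,
`‖χ_ζ * f - f‖ (x) ≤ (cos α) ^ (-n/2) ∫ h_t (y) ‖f (x - y) - f x‖ dy`.
Writing `f = w g`, Peetre's inequality `w (x - y) ≤ w x (1 + ‖y‖) ^ k` together with the uniform
continuity of the bounded `g`, in the form `‖g u - g v‖ ≤ η + L ‖u - v‖`, bounds
`‖f (x - y) - f x‖ / w x` uniformly in `x` by a continuous `Φ y` of exponential growth with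
`Φ 0 = η`. Finally `∫ h_t Φ → Φ 0` as `t → 0⁺`: substituting `y = √t z` turns it into a
parametric integral against `h_1`, continuous in `√t` by dominated convergence.
-/

open MeasureTheory Real Filter Topology Module

theorem exp_neg_mul_sq_add_mul_le {b : ℝ} (hb : 0 < b) (a t : ℝ) :
    exp (-b * t ^ 2 + a * t) ≤ exp (a ^ 2 / (2 * b)) * exp (-(b / 2) * t ^ 2) := by
  rw [← exp_add, exp_le_exp]
  have h : a * t ≤ a ^ 2 / (2 * b) + b / 2 * t ^ 2 := by
    rw [div_add' _ _ _ (by positivity), le_div_iff₀ (by positivity)]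
    nlinarith [sq_nonneg (b * t - a)]
  linarith

theorem one_add_rpow_le_exp_mul {m t : ℝ} (hm : 0 ≤ m) (ht : -1 ≤ t) :
    (1 + t) ^ m ≤ exp (m * t) := by
  rw [mul_comm, exp_mul]
  exact rpow_le_rpow (by linarith) (by linarith [add_one_le_exp t]) hm

theorem UniformContinuous.exists_dist_le_add_mul_dist {α β : Type*} [PseudoMetricSpace α]
    [PseudoMetricSpace β] {g : α → β} (hg : UniformContinuous g)
    (hb : Bornology.IsBounded (Set.range g)) {ε : ℝ} (hε : 0 < ε) :
    ∃ L, 0 ≤ L ∧ ∀ u v, dist (g u) (g v) ≤ ε + L * dist u v := by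
  obtain ⟨δ, hδ, hgδ⟩ := Metric.uniformContinuous_iff.1 hg ε hε
  obtain ⟨C, hC⟩ := Metric.isBounded_iff.1 hb
  refine ⟨max C 0 / δ, by positivity, fun u v => ?_⟩
  rcases lt_or_ge (dist u v) δ with huv | huv
  · exact (hgδ huv).le.trans (le_add_of_nonneg_right (by positivity))
  · calc dist (g u) (g v) ≤ max C 0 / δ * δ := by
          rw [div_mul_cancel₀ _ hδ.ne']; exact (hC ⟨u, rfl⟩ ⟨v, rfl⟩).trans (le_max_left _ _)
      _ ≤ max C 0 / δ * dist u v := by gcongr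
      _ ≤ ε + max C 0 / δ * dist u v := le_add_of_nonneg_left hε.le

theorem Complex.cos_mul_norm_le_re {ζ : ℂ} {α : ℝ} (harg : |ζ.arg| ≤ α) (hα : α ≤ π) :
    Real.cos α * ‖ζ‖ ≤ ζ.re := by
  rw [← norm_mul_cos_arg, mul_comm, ← Real.cos_abs ζ.arg]
  exact mul_le_mul_of_nonneg_left (cos_le_cos_of_nonneg_of_le_pi (abs_nonneg _) hα harg)
    (norm_nonneg _)

theorem norm_integral_smul_sub_le {α 𝕜 E : Type*} [MeasurableSpace α] {μ : Measure α} [RCLike 𝕜]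
    [NormedAddCommGroup E] [NormedSpace ℝ E] [NormedSpace 𝕜 E] [CompleteSpace E] {K : α → 𝕜}
    (hK : Integrable K μ) (hK1 : ∫ a, K a ∂μ = 1) {F : α → E}
    (hKF : Integrable (fun a => K a • F a) μ) (e : E) {B : α → ℝ} (hB : Integrable B μ)
    (hle : ∀ a, ‖K a‖ * ‖F a - e‖ ≤ B a) :
    ‖(∫ a, K a • F a ∂μ) - e‖ ≤ ∫ a, B a ∂μ := by
  have h : (∫ a, K a • F a ∂μ) - e = ∫ a, K a • (F a - e) ∂μ := by
    simp_rw [smul_sub]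
    rw [integral_sub hKF (hK.smul_const e), integral_smul_const, hK1, one_smul]
  rw [h]
  exact norm_integral_le_of_norm_le hB (ae_of_all _ fun a => (norm_smul _ _).trans_le (hle a))

section Weight

variable {E Y : Type*} [SeminormedAddCommGroup E] [SeminormedAddCommGroup Y] [NormedSpace ℝ Y]
  {k : ℝ}

theorem one_add_norm_sub_rpow_le (hk : 0 ≤ k) (x y : E) :
    (1 + ‖x - y‖) ^ k ≤ (1 + ‖x‖) ^ k * (1 + ‖y‖) ^ k := by
  rw [← mul_rpow (by positivity) (by positivity)]
  gcongr
  nlinarith [norm_sub_le x y, mul_nonneg (norm_nonneg x) (norm_nonneg y)]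

theorem norm_smul_sub_smul_le (a b : ℝ) (u v : Y) :
    ‖a • u - b • v‖ ≤ |a| * ‖u - v‖ + |a - b| * ‖v‖ := by
  rw [show a • u - b • v = a • (u - v) + (a - b) • v by rw [smul_sub, sub_smul]; abel]
  exact (norm_add_le _ _).trans_eq (by simp only [norm_smul, Real.norm_eq_abs])

theorem norm_rpow_smul_sub_rpow_smul_le (hk : 0 ≤ k) (g : E → Y) (x y : E) :
    ‖(1 + ‖x - y‖) ^ k • g (x - y) - (1 + ‖x‖) ^ k • g x‖ ≤
      (1 + ‖x‖) ^ k * ((1 + ‖y‖) ^ k * ‖g (x - y) - g x‖ + ((1 + ‖y‖) ^ k - 1) * ‖g x‖) := by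
  have hup := one_add_norm_sub_rpow_le hk x y
  have hdown : (1 + ‖x‖) ^ k ≤ (1 + ‖x - y‖) ^ k * (1 + ‖y‖) ^ k := by
    simpa using one_add_norm_sub_rpow_le hk (x - y) (-y)
  have hxy : 0 ≤ (1 + ‖x - y‖) ^ k := by positivity
  have hdiff : |(1 + ‖x - y‖) ^ k - (1 + ‖x‖) ^ k| ≤ (1 + ‖x‖) ^ k * ((1 + ‖y‖) ^ k - 1) := by
    rw [abs_sub_le_iff]
    constructor
    · linarith
    · rcases le_total ((1 + ‖x - y‖) ^ k) ((1 + ‖x‖) ^ k) with h | h <;> nlinarith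
  refine (norm_smul_sub_smul_le _ _ _ _).trans ?_
  rw [abs_of_nonneg hxy, mul_add, ← mul_assoc, ← mul_assoc]
  gcongr

/-- Majorant of `‖f (x - y) - f x‖ / (1 + ‖x‖) ^ k` for `f = (1 + ‖·‖) ^ k • g` with `‖g‖ ≤ C`
and `dist (g u) (g v) ≤ ε + L * dist u v`, uniform in `x`. -/
noncomputable def weightedModulus (k C ε L : ℝ) (y : E) : ℝ :=
  (1 + ‖y‖) ^ k * (ε + L * ‖y‖ + C) - C

variable {C ε L : ℝ}

theorem continuous_weightedModulus : Continuous (weightedModulus (E := E) k C ε L) := by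
  unfold weightedModulus
  exact (((continuous_const.add continuous_norm).rpow_const fun y =>
    Or.inl (add_pos_of_pos_of_nonneg one_pos (norm_nonneg y)).ne').mul (by fun_prop)).sub
    continuous_const

theorem weightedModulus_zero : weightedModulus k C ε L (0 : E) = ε := by
  simp [weightedModulus]

theorem norm_weightedModulus_le (hk : 0 ≤ k) (hC : 0 ≤ C) (hε : 0 ≤ ε) (hL : 0 ≤ L) (y : E) :
    ‖weightedModulus k C ε L y‖ ≤ (ε + L + C) * exp ((k + 1) * ‖y‖) := by
  have hP : 1 ≤ (1 + ‖y‖) ^ k := one_le_rpow (by linarith [norm_nonneg y]) hk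
  have hA : ε + L * ‖y‖ + C ≤ (ε + L + C) * exp ‖y‖ :=
    calc ε + L * ‖y‖ + C ≤ (ε + L + C) * (‖y‖ + 1) := by nlinarith [norm_nonneg y]
      _ ≤ (ε + L + C) * exp ‖y‖ := by gcongr; exact add_one_le_exp _
  have hA0 : 0 ≤ ε + L * ‖y‖ + C := by positivity
  unfold weightedModulus
  have hΦ0 : 0 ≤ (1 + ‖y‖) ^ k * (ε + L * ‖y‖ + C) - C := by
    nlinarith [mul_le_mul_of_nonneg_right hP hA0, mul_nonneg hL (norm_nonneg y)]
  rw [Real.norm_of_nonneg hΦ0, show (k + 1) * ‖y‖ = k * ‖y‖ + ‖y‖ by ring, exp_add]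
  calc (1 + ‖y‖) ^ k * (ε + L * ‖y‖ + C) - C ≤ (1 + ‖y‖) ^ k * (ε + L * ‖y‖ + C) := by linarith
    _ ≤ exp (k * ‖y‖) * ((ε + L + C) * exp ‖y‖) := by
        gcongr
        exact one_add_rpow_le_exp_mul hk (by linarith [norm_nonneg y])
    _ = (ε + L + C) * (exp (k * ‖y‖) * exp ‖y‖) := by ring

theorem norm_rpow_smul_sub_rpow_smul_le_weightedModulus (hk : 0 ≤ k) {g : E → Y}
    (hC : ∀ x, ‖g x‖ ≤ C) (hL : ∀ u v, dist (g u) (g v) ≤ ε + L * dist u v) (x y : E) :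
    ‖(1 + ‖x - y‖) ^ k • g (x - y) - (1 + ‖x‖) ^ k • g x‖ ≤
      (1 + ‖x‖) ^ k * weightedModulus k C ε L y := by
  have hg : ‖g (x - y) - g x‖ ≤ ε + L * ‖y‖ := by
    simpa [dist_eq_norm] using hL (x - y) x
  have hP : 1 ≤ (1 + ‖y‖) ^ k := one_le_rpow (by linarith [norm_nonneg y]) hk
  refine (norm_rpow_smul_sub_rpow_smul_le hk g x y).trans ?_
  unfold weightedModulus
  gcongr
  calc (1 + ‖y‖) ^ k * ‖g (x - y) - g x‖ + ((1 + ‖y‖) ^ k - 1) * ‖g x‖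
      ≤ (1 + ‖y‖) ^ k * (ε + L * ‖y‖) + ((1 + ‖y‖) ^ k - 1) * C := by
        gcongr
        exact hC x
    _ = (1 + ‖y‖) ^ k * (ε + L * ‖y‖ + C) - C := by ring

end Weight

section Kernels

variable {V : Type*} [NormedAddCommGroup V] [InnerProductSpace ℝ V]

variable (V) in
noncomputable def heatKernel (t : ℝ) (v : V) : ℝ :=
  (4 * π * t) ^ (-(finrank ℝ V : ℝ) / 2) * exp (-(4 * t)⁻¹ * ‖v‖ ^ 2)

variable (V) in
noncomputable def gaussKernel (ζ : ℂ) (v : V) : ℂ :=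
  (4 * π * ζ) ^ (-(finrank ℝ V : ℂ) / 2) * Complex.exp (-(‖v‖ : ℂ) ^ 2 / (4 * ζ))

theorem heatKernel_nonneg {t : ℝ} (ht : 0 ≤ t) (v : V) : 0 ≤ heatKernel V t v := by
  unfold heatKernel; positivity

theorem heatKernel_eq_smul {t : ℝ} (ht : 0 < t) (v : V) :
    heatKernel V t v = (√t ^ finrank ℝ V)⁻¹ * heatKernel V 1 ((√t)⁻¹ • v) := by
  have hs : 0 < √t := sqrt_pos.2 ht
  have hpow : √t ^ finrank ℝ V = t ^ ((finrank ℝ V : ℝ) / 2) := by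
    rw [sqrt_eq_rpow, ← rpow_natCast, ← rpow_mul ht.le]; ring_nf
  simp only [heatKernel, norm_smul, norm_inv, Real.norm_of_nonneg hs.le, mul_pow, inv_pow,
    sq_sqrt ht.le, mul_one, hpow, mul_rpow (by positivity : (0:ℝ) ≤ 4 * π) ht.le, neg_div,
    rpow_neg ht.le]
  ring_nf

theorem norm_gaussKernel (ζ : ℂ) (v : V) :
    ‖gaussKernel V ζ v‖ =
      (4 * π * ‖ζ‖) ^ (-(finrank ℝ V : ℝ) / 2) * exp (-(4 * ζ)⁻¹.re * ‖v‖ ^ 2) := by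
  rw [gaussKernel, norm_mul, Complex.norm_exp,
    show -(finrank ℝ V : ℂ) / 2 = ((-(finrank ℝ V : ℝ) / 2 : ℝ) : ℂ) by push_cast; rfl,
    Complex.norm_cpow_real,
    show -(‖v‖ : ℂ) ^ 2 / (4 * ζ) = ((-‖v‖ ^ 2 : ℝ) : ℂ) * (4 * ζ)⁻¹ by push_cast; ring,
    Complex.re_ofReal_mul]
  simp [abs_of_pos pi_pos, mul_comm]

theorem norm_gaussKernel_le {ζ : ℂ} (hζ : ζ ≠ 0) {c : ℝ} (hc : 0 < c) (hcζ : c * ‖ζ‖ ≤ ζ.re)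
    (v : V) : ‖gaussKernel V ζ v‖ ≤ c ^ (-(finrank ℝ V : ℝ) / 2) * heatKernel V (‖ζ‖ / c) v := by
  have hζ' : 0 < ‖ζ‖ := norm_pos_iff.2 hζ
  have hre : (4 * (‖ζ‖ / c))⁻¹ ≤ (4 * ζ)⁻¹.re := by
    rw [Complex.inv_re, Complex.normSq_eq_norm_sq, norm_mul]
    simp only [Complex.mul_re, Complex.re_ofNat, Complex.im_ofNat, zero_mul, sub_zero,
      Complex.norm_ofNat]
    field_simp
    nlinarith
  rw [norm_gaussKernel, heatKernel, ← mul_assoc, ← mul_rpow hc.le (by positivity),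
    show c * (4 * π * (‖ζ‖ / c)) = 4 * π * ‖ζ‖ by field_simp]
  gcongr

variable [FiniteDimensional ℝ V] [MeasurableSpace V] [BorelSpace V]

theorem integrable_exp_neg_mul_sq_norm {b : ℝ} (hb : 0 < b) :
    Integrable (fun v : V => exp (-b * ‖v‖ ^ 2)) := by
  refine (GaussianFourier.integrable_cexp_neg_mul_sq_norm_add (V := V)
    (b := b) (by simpa using hb) 0 0).norm.congr (ae_of_all _ fun v => ?_)
  simp [Complex.norm_exp, ← Complex.ofReal_pow]

theorem integrable_exp_neg_mul_sq_norm_add_mul_norm {b : ℝ} (hb : 0 < b) (a : ℝ) :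
    Integrable (fun v : V => exp (-b * ‖v‖ ^ 2 + a * ‖v‖)) :=
  ((integrable_exp_neg_mul_sq_norm (half_pos hb)).const_mul _).mono' (by fun_prop)
    (ae_of_all _ fun v => by
      simpa [abs_of_pos (exp_pos _)] using exp_neg_mul_sq_add_mul_le hb a ‖v‖)

theorem integral_heatKernel {t : ℝ} (ht : 0 < t) : ∫ v, heatKernel V t v = 1 := by
  unfold heatKernel
  rw [integral_const_mul, GaussianFourier.integral_rexp_neg_mul_sq_norm (by positivity),
    show π / (4 * t)⁻¹ = 4 * π * t by field_simp, neg_div, rpow_neg (by positivity),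
    inv_mul_cancel₀ (by positivity)]

theorem integrable_heatKernel_mul_exp {t : ℝ} (ht : 0 < t) (a : ℝ) :
    Integrable (fun v : V => heatKernel V t v * exp (a * ‖v‖)) := by
  simp_rw [heatKernel, mul_assoc, ← exp_add]
  exact (integrable_exp_neg_mul_sq_norm_add_mul_norm (by positivity) a).const_mul _

theorem integrable_heatKernel_mul {t : ℝ} (ht : 0 < t) {Φ : V → ℝ} (hΦ : AEStronglyMeasurable Φ)
    {D a : ℝ} (hΦle : ∀ v, ‖Φ v‖ ≤ D * exp (a * ‖v‖)) :
    Integrable (fun v => heatKernel V t v * Φ v) := by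
  refine ((integrable_heatKernel_mul_exp ht a).const_mul D).mono' ?_ (ae_of_all _ fun v => ?_)
  · exact (Continuous.aestronglyMeasurable (by unfold heatKernel; fun_prop)).mul hΦ
  · rw [norm_mul, Real.norm_of_nonneg (heatKernel_nonneg ht.le v), mul_left_comm]
    exact mul_le_mul_of_nonneg_left (hΦle v) (heatKernel_nonneg ht.le v)

theorem integral_heatKernel_mul_eq {t : ℝ} (ht : 0 < t) (Φ : V → ℝ) :
    ∫ v, heatKernel V t v * Φ v = ∫ z, heatKernel V 1 z * Φ (√t • z) := by
  have hs : 0 < √t := sqrt_pos.2 ht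
  simp_rw [heatKernel_eq_smul ht, mul_assoc, integral_const_mul]
  have h := Measure.integral_comp_inv_smul_of_nonneg volume
    (fun z => heatKernel V 1 z * Φ (√t • z)) hs.le
  simp only [smul_smul, mul_inv_cancel₀ hs.ne', one_smul, smul_eq_mul] at h
  rw [h, inv_mul_cancel_left₀ (pow_ne_zero _ hs.ne')]

theorem tendsto_integral_heatKernel_mul {Φ : V → ℝ} (hΦ : Continuous Φ) {D a : ℝ}
    (hΦle : ∀ v, ‖Φ v‖ ≤ D * exp (a * ‖v‖)) :
    Tendsto (fun t => ∫ v, heatKernel V t v * Φ v) (𝓝[>] 0) (𝓝 (Φ 0)) := by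
  have hD : 0 ≤ D := by simpa using (norm_nonneg _).trans (hΦle 0)
  have hbound : ∀ s : ℝ, |s| ≤ 1 → ∀ z : V,
      ‖heatKernel V 1 z * Φ (s • z)‖ ≤ D * (heatKernel V 1 z * exp (|a| * ‖z‖)) := by
    intro s hs z
    have hexp : a * ‖s • z‖ ≤ |a| * ‖z‖ := by
      rw [norm_smul, Real.norm_eq_abs]
      exact mul_le_mul (le_abs_self a) (mul_le_of_le_one_left (norm_nonneg z) hs) (by positivity)
        (abs_nonneg a)
    rw [norm_mul, Real.norm_of_nonneg (heatKernel_nonneg zero_le_one z), mul_left_comm]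
    gcongr
    · exact heatKernel_nonneg zero_le_one z
    · exact (hΦle _).trans (by gcongr)
  have hcont : ContinuousAt (fun s : ℝ => ∫ z, heatKernel V 1 z * Φ (s • z)) 0 := by
    refine continuousAt_of_dominated (Eventually.of_forall fun s => ?_) ?_
      ((integrable_heatKernel_mul_exp one_pos |a|).const_mul D) (ae_of_all _ fun z => ?_)
    · exact (Continuous.aestronglyMeasurable (by unfold heatKernel; fun_prop))
    · filter_upwards [Icc_mem_nhds neg_one_lt_zero one_pos] with s hs
      exact ae_of_all _ (hbound s (abs_le.2 hs))
    · exact (continuous_const.mul (hΦ.comp (continuous_id.smul continuous_const))).continuousAt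
  have h0 : ∫ z, heatKernel V 1 z * Φ ((0 : ℝ) • z) = Φ 0 := by
    simp [integral_mul_const, integral_heatKernel one_pos]
  have hsqrt : Tendsto (fun t : ℝ => √t) (𝓝[>] 0) (𝓝 0) := by
    simpa using continuous_sqrt.continuousAt.tendsto.mono_left (nhdsWithin_le_nhds (a := (0:ℝ)))
  refine ((h0 ▸ hcont.tendsto).comp hsqrt).congr' ?_
  filter_upwards [self_mem_nhdsWithin] with t ht using (integral_heatKernel_mul_eq ht Φ).symm

theorem integral_gaussKernel {ζ : ℂ} (hζ : 0 < ζ.re) : ∫ v, gaussKernel V ζ v = 1 := by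
  have hζ0 : ζ ≠ 0 := by rintro rfl; simp at hζ
  have hre : 0 < (4 * ζ)⁻¹.re := by
    rw [Complex.inv_re]
    exact div_pos (by simpa using hζ) (Complex.normSq_pos.2 (by simpa using hζ0))
  have hexp : ∀ v : V, -(‖v‖ : ℂ) ^ 2 / (4 * ζ) = -(4 * ζ)⁻¹ * ‖v‖ ^ 2 := fun v => by ring
  simp_rw [gaussKernel, hexp]
  rw [integral_const_mul, GaussianFourier.integral_cexp_neg_mul_sq_norm hre,
    show (π : ℂ) / (4 * ζ)⁻¹ = 4 * π * ζ by field_simp,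
    ← Complex.cpow_add _ _ (by simp [hζ0, pi_ne_zero])]
  ring_nf
  exact Complex.cpow_zero _

theorem integrable_gaussKernel_smul {Y : Type*} [NormedAddCommGroup Y] [NormedSpace ℂ Y]
    {ζ : ℂ} (hζ : 0 < ζ.re) {F : V → Y} (hF : AEStronglyMeasurable F) {D a : ℝ}
    (hFle : ∀ v, ‖F v‖ ≤ D * exp (a * ‖v‖)) :
    Integrable (fun v => gaussKernel V ζ v • F v) := by
  have hζ0 : ζ ≠ 0 := by rintro rfl; simp at hζ
  have hc : 0 < ζ.re / ‖ζ‖ := div_pos hζ (norm_pos_iff.2 hζ0)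
  have hint := (integrable_heatKernel_mul (t := ‖ζ‖ / (ζ.re / ‖ζ‖)) (by positivity) hF.norm
    (D := D) (a := a) (by simpa using hFle)).const_mul ((ζ.re / ‖ζ‖) ^ (-(finrank ℝ V : ℝ) / 2))
  refine hint.mono' ((Continuous.aestronglyMeasurable (by unfold gaussKernel; fun_prop)).smul hF)
    (ae_of_all _ fun v => ?_)
  rw [norm_smul, ← mul_assoc]
  gcongr
  exact norm_gaussKernel_le hζ0 hc (by rw [div_mul_cancel₀ _ (norm_pos_iff.2 hζ0).ne']) v

theorem integrable_gaussKernel {ζ : ℂ} (hζ : 0 < ζ.re) : Integrable (gaussKernel V ζ) := by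
  simpa using integrable_gaussKernel_smul hζ (F := fun _ => (1 : ℂ)) aestronglyMeasurable_const
    (D := 1) (a := 0) (by simp)

theorem norm_integral_gaussKernel_smul_sub_le {Y : Type*} [NormedAddCommGroup Y]
    [NormedSpace ℂ Y] [CompleteSpace Y] {k C ε L : ℝ} (hk : 0 ≤ k) {g : V → Y} (hg : Continuous g)
    (hC : ∀ x, ‖g x‖ ≤ C) (hL0 : 0 ≤ L) (hL : ∀ u v, dist (g u) (g v) ≤ ε + L * dist u v)
    {ζ : ℂ} (hζ : ζ ≠ 0) {c : ℝ} (hc : 0 < c) (hcζ : c * ‖ζ‖ ≤ ζ.re) (x : V) :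
    ‖(∫ y, gaussKernel V ζ y • ((1 + ‖x - y‖) ^ k • g (x - y))) - (1 + ‖x‖) ^ k • g x‖ ≤
      (1 + ‖x‖) ^ k * (c ^ (-(finrank ℝ V : ℝ) / 2) *
        ∫ y, heatKernel V (‖ζ‖ / c) y * weightedModulus k C ε L y) := by
  have hC0 : 0 ≤ C := (norm_nonneg _).trans (hC x)
  have hε : 0 ≤ ε := by simpa using hL x x
  have hζ' : 0 < ‖ζ‖ := norm_pos_iff.2 hζ
  have hre : 0 < ζ.re := (by positivity : 0 < c * ‖ζ‖).trans_le hcζ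
  have hΦ := integrable_heatKernel_mul (t := ‖ζ‖ / c) (by positivity)
    continuous_weightedModulus.aestronglyMeasurable (norm_weightedModulus_le (E := V) hk hC0 hε hL0)
  have hFle : ∀ y, ‖(1 + ‖x - y‖) ^ k • g (x - y)‖ ≤ (1 + ‖x‖) ^ k * C * exp (k * ‖y‖) :=
    fun y => calc
      _ = (1 + ‖x - y‖) ^ k * ‖g (x - y)‖ := by rw [norm_smul, norm_of_nonneg (by positivity)]
      _ ≤ (1 + ‖x‖) ^ k * (1 + ‖y‖) ^ k * C :=
        mul_le_mul (one_add_norm_sub_rpow_le hk x y) (hC _) (norm_nonneg _) (by positivity)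
      _ ≤ (1 + ‖x‖) ^ k * C * exp (k * ‖y‖) := by
        rw [mul_right_comm]
        gcongr
        exact one_add_rpow_le_exp_mul hk (by linarith [norm_nonneg y])
  have hF : Continuous fun y => (1 + ‖x - y‖) ^ k • g (x - y) := by fun_prop (disch := assumption)
  rw [mul_left_comm, ← integral_const_mul, ← integral_const_mul]
  refine norm_integral_smul_sub_le (integrable_gaussKernel hre) (integral_gaussKernel hre)
    (integrable_gaussKernel_smul hre hF.aestronglyMeasurable hFle)
    _ ((hΦ.const_mul _).const_mul _) fun y => ?_
  calc _ ≤ (c ^ (-(finrank ℝ V : ℝ) / 2) * heatKernel V (‖ζ‖ / c) y) *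
        ((1 + ‖x‖) ^ k * weightedModulus k C ε L y) :=
        mul_le_mul (norm_gaussKernel_le hζ hc hcζ y)
          (norm_rpow_smul_sub_rpow_smul_le_weightedModulus hk hC hL x y) (norm_nonneg _)
          (mul_nonneg (by positivity) (heatKernel_nonneg (by positivity) y))
    _ = _ := by ring

theorem iSup_norm_integral_gaussKernel_smul_sub_div_le {Y : Type*} [NormedAddCommGroup Y]
    [NormedSpace ℂ Y] [CompleteSpace Y] {k C ε L : ℝ} (hk : 0 ≤ k) {g : V → Y} (hg : Continuous g)
    (hC : ∀ x, ‖g x‖ ≤ C) (hL0 : 0 ≤ L) (hL : ∀ u v, dist (g u) (g v) ≤ ε + L * dist u v)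
    {ζ : ℂ} (hζ : ζ ≠ 0) {c : ℝ} (hc : 0 < c) (hcζ : c * ‖ζ‖ ≤ ζ.re) :
    ⨆ x, ‖(∫ y, gaussKernel V ζ y • ((1 + ‖x - y‖) ^ k • g (x - y))) - (1 + ‖x‖) ^ k • g x‖ /
        (1 + ‖x‖) ^ k ≤
      c ^ (-(finrank ℝ V : ℝ) / 2) * ∫ y, heatKernel V (‖ζ‖ / c) y * weightedModulus k C ε L y :=
  ciSup_le fun x => (div_le_iff₀ (by positivity)).2 <| by
    rw [mul_comm]
    exact norm_integral_gaussKernel_smul_sub_le hk hg hC hL0 hL hζ hc hcζ x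

end Kernels

theorem gaussian_approx_identity_buc (n : ℕ) (k : ℝ) (hk : 0 ≤ k) (α : ℝ)
    (hα0 : 0 < α) (hα : α < π / 2)
    {Y : Type*} [NormedAddCommGroup Y] [NormedSpace ℂ Y] [CompleteSpace Y]
    (w : EuclideanSpace ℝ (Fin n) → ℝ) (hw : ∀ x, w x = (1 + ‖x‖) ^ k)
    (g : EuclideanSpace ℝ (Fin n) → Y) (hgu : UniformContinuous g)
    (hgb : ∃ C, ∀ x, ‖g x‖ ≤ C)
    (f : EuclideanSpace ℝ (Fin n) → Y) (hf : ∀ x, f x = (w x : ℂ) • g x)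
    (χ : ℂ → EuclideanSpace ℝ (Fin n) → ℂ)
    (hχ : ∀ ζ x, χ ζ x =
      (4 * (π : ℂ) * ζ) ^ (-(n : ℂ) / 2) * Complex.exp (-(‖x‖ : ℂ) ^ 2 / (4 * ζ))) :
    ∀ ε > 0, ∃ δ > 0, ∀ ζ : ℂ, ζ ≠ 0 → |Complex.arg ζ| < α → ‖ζ‖ < δ →
      ⨆ x, ‖(∫ y, χ ζ y • f (x - y)) - f x‖ / w x < ε := by
  obtain rfl : w = fun x => (1 + ‖x‖) ^ k := funext hw
  obtain rfl : f = fun x => (1 + ‖x‖) ^ k • g x := funext fun x => by rw [hf, Complex.coe_smul]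
  obtain rfl : χ = gaussKernel _ := by ext ζ x; simp [hχ, gaussKernel]
  beta_reduce
  intro ε hε
  have hc : 0 < cos α := cos_pos_of_mem_Ioo ⟨by linarith, hα⟩
  obtain ⟨C, hC⟩ := hgb
  set η := cos α ^ ((n : ℝ) / 2) * ε / 2 with hη
  have hη0 : 0 < η := by positivity
  obtain ⟨L, hL0, hL⟩ := hgu.exists_dist_le_add_mul_dist
    (isBounded_iff_forall_norm_le.2 ⟨C, Set.forall_mem_range.2 hC⟩) hη0
  have hlim := tendsto_integral_heatKernel_mul continuous_weightedModulus
    (norm_weightedModulus_le (E := EuclideanSpace ℝ (Fin n)) hk ((norm_nonneg _).trans (hC 0))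
      hη0.le hL0)
  rw [weightedModulus_zero] at hlim
  obtain ⟨δ, hδ, hδI⟩ := mem_nhdsGT_iff_exists_Ioo_subset.1
    (hlim (Iio_mem_nhds (show η < 2 * η by linarith)))
  refine ⟨cos α * δ, mul_pos hc hδ, fun ζ hζ harg hζδ => ?_⟩
  have hI : _ < 2 * η := hδI ⟨div_pos (norm_pos_iff.2 hζ) hc, (div_lt_iff₀' hc).2 hζδ⟩
  calc _ ≤ cos α ^ (-(n : ℝ) / 2) * _ := by
        simpa using iSup_norm_integral_gaussKernel_smul_sub_div_le hk hgu.continuous hC hL0 hL hζ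
          hc (Complex.cos_mul_norm_le_re harg.le (by linarith))
    _ < cos α ^ (-(n : ℝ) / 2) * (cos α ^ ((n : ℝ) / 2) * ε) := by gcongr; linarith
    _ = ε := by rw [← mul_assoc, ← rpow_add hc, neg_div, neg_add_cancel, rpow_zero, one_mul]
end
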